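/- Let G have real edge weights in [1,W], let k = ⌈log₂(nW)⌉, and for i = 0,...,k let G_i be the (A, B_i)-rounded version of G with B_i = 2^i and A = 2n^a/ε (for fixed ε > 0 and 0 < a < 1). Then for any pair s,t: dist_G(s,t) ≤ min_i (B_i/A)·dist_{G_i}(s,t), and if some shortest s-t path uses at most n^a edges, then min_i (B_i/A)·dist_{G_i}(s,t) ≤ (1+ε)·dist_G(s,t). -/

import Mathlib

/-!
Rounding an edge of length `L ≤ B` to `⌈A L / B⌉` units of `B / A` never shortens it and lengthens
it by less than `B / A`. Hence every rescaled rounded distance bounds `dist_G` from above, and a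
walk with `m` edges, all of length at most `B`, gains less than `m B / A` in the rounded graph.
For a shortest path of length `D` with `m ≤ n^a` edges take the least scale `B = 2^i ≥ D`: then
`B ≤ max 1 (2D)`, and `m ≤ D` because every edge has length at least `1`; with `A = 2 n^a / ε`
this makes the error `m B / A` at most `ε D`. As `D ≤ m W ≤ n W ≤ 2^k`, this scale is among
`i ≤ k`.
-/

open scoped ENNReal Classical

variable {V : Type*}

/-- Length of a walk (list of vertices) given edge weights `len`
(`len u v = ∞` means the edge `(u,v)` is absent). -/
noncomputable def walkLen (len : V → V → ℝ≥0∞) : List V → ℝ≥0∞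
  | [] => 0
  | [_] => 0
  | u :: v :: rest => len u v + walkLen len (v :: rest)

/-- `p` is a walk starting at `s` and ending at `t`. -/
def IsWalkFromTo (s t : V) (p : List V) : Prop :=
  p.head? = some s ∧ p.getLast? = some t

/-- Shortest-path distance: infimum of lengths of walks from `s` to `t`. -/
noncomputable def gdist (len : V → V → ℝ≥0∞) (s t : V) : ℝ≥0∞ :=
  ⨅ (p : List V) (_ : IsWalkFromTo s t p), walkLen len p

theorem walkLen_cons_cons (len : V → V → ℝ≥0∞) (u v : V) (rest : List V) :
    walkLen len (u :: v :: rest) = len u v + walkLen len (v :: rest) := rfl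

theorem walkLen_le_walkLen_of_isChain {len len' : V → V → ℝ≥0∞} :
    ∀ {p : List V}, p.IsChain (fun u v => len u v ≤ len' u v) → walkLen len p ≤ walkLen len' p
  | [], _ | [_], _ => le_rfl
  | _ :: _ :: _, h => by
    rw [List.isChain_cons_cons] at h
    exact add_le_add h.1 (walkLen_le_walkLen_of_isChain h.2)

theorem walkLen_mono {len len' : V → V → ℝ≥0∞} (h : ∀ u v, len u v ≤ len' u v) :
    ∀ p : List V, walkLen len p ≤ walkLen len' p
  | [] | [_] => le_rfl
  | _ :: _ :: _ => add_le_add (h _ _) (walkLen_mono h _)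

theorem walkLen_add (len len' : V → V → ℝ≥0∞) :
    ∀ p : List V, walkLen (fun u v => len u v + len' u v) p = walkLen len p + walkLen len' p
  | [] | [_] => by simp [walkLen]
  | u :: v :: rest => by
    simp only [walkLen_cons_cons, walkLen_add len len' (v :: rest)]
    ring

theorem walkLen_const_mul (c : ℝ≥0∞) (len : V → V → ℝ≥0∞) :
    ∀ p : List V, walkLen (fun u v => c * len u v) p = c * walkLen len p
  | [] | [_] => by simp [walkLen]
  | u :: v :: rest => by
    rw [walkLen_cons_cons, walkLen_cons_cons, walkLen_const_mul c len (v :: rest), mul_add]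

theorem walkLen_const (C : ℝ≥0∞) :
    ∀ p : List V, walkLen (fun _ _ => C) p = (p.length - 1 : ℕ) * C
  | [] | [_] => by simp [walkLen]
  | u :: v :: rest => by
    rw [walkLen_cons_cons, walkLen_const C (v :: rest)]
    simp only [List.length_cons, Nat.add_sub_cancel]
    push_cast
    ring

theorem isChain_le_walkLen (len : V → V → ℝ≥0∞) :
    ∀ p : List V, p.IsChain fun u v => len u v ≤ walkLen len p
  | [] => List.isChain_nil
  | [_] => List.isChain_singleton _
  | u :: v :: rest => by
    rw [List.isChain_cons_cons, walkLen_cons_cons]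
    exact ⟨le_self_add, (isChain_le_walkLen len (v :: rest)).imp fun _ _ h => h.trans le_add_self⟩

theorem natCast_le_walkLen {len : V → V → ℝ≥0∞} (h : ∀ u v, 1 ≤ len u v) (p : List V) :
    ((p.length - 1 : ℕ) : ℝ≥0∞) ≤ walkLen len p := by
  simpa [walkLen_const] using walkLen_mono h p

theorem toReal_walkLen_le {len : V → V → ℝ≥0∞} {W : ℝ} (hW : 0 ≤ W)
    (h : ∀ u v, len u v ≠ ∞ → len u v ≤ ENNReal.ofReal W) (p : List V) :
    (walkLen len p).toReal ≤ (p.length - 1 : ℕ) * W := by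
  rcases eq_or_ne (walkLen len p) ∞ with htop | hfin
  · rw [htop, ENNReal.toReal_top]
    positivity
  have hedges : p.IsChain fun u v => len u v ≤ ENNReal.ofReal W :=
    (isChain_le_walkLen len p).imp fun u v huv => h u v (ne_top_of_le_ne_top hfin huv)
  have := walkLen_le_walkLen_of_isChain hedges
  rw [walkLen_const, ← ENNReal.ofReal_natCast, ← ENNReal.ofReal_mul (Nat.cast_nonneg _)] at this
  exact ENNReal.toReal_le_of_le_ofReal (by positivity) this

theorem gdist_le_walkLen {len : V → V → ℝ≥0∞} {s t : V} {p : List V} (hp : IsWalkFromTo s t p) :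
    gdist len s t ≤ walkLen len p :=
  iInf₂_le p hp

theorem gdist_mono {len len' : V → V → ℝ≥0∞} (h : ∀ u v, len u v ≤ len' u v) (s t : V) :
    gdist len s t ≤ gdist len' s t :=
  iInf₂_mono fun p _ => walkLen_mono h p

theorem gdist_const_mul {c : ℝ≥0∞} (hc₀ : c ≠ 0) (hc : c ≠ ∞) (len : V → V → ℝ≥0∞) (s t : V) :
    gdist (fun u v => c * len u v) s t = c * gdist len s t := by
  simp only [gdist, walkLen_const_mul, ENNReal.mul_iInf_of_ne hc₀ hc]

noncomputable def roundedLen (A B : ℝ) (len : V → V → ℝ≥0∞) (u v : V) : ℝ≥0∞ :=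
  if len u v ≤ ENNReal.ofReal B then ((⌈A * (len u v).toReal / B⌉₊ : ℕ) : ℝ≥0∞) else ∞

section Rounding

variable {A B : ℝ} (hA : 0 < A) (hB : 0 < B) {len : V → V → ℝ≥0∞}
include hA hB

theorem le_mul_roundedLen (u v : V) :
    len u v ≤ ENNReal.ofReal (B / A) * roundedLen A B len u v := by
  unfold roundedLen
  split_ifs with h
  · have hfin : len u v ≠ ∞ := ne_top_of_le_ne_top ENNReal.ofReal_ne_top h
    conv_lhs => rw [← ENNReal.ofReal_toReal hfin]
    rw [← ENNReal.ofReal_natCast, ← ENNReal.ofReal_mul (by positivity)]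
    refine ENNReal.ofReal_le_ofReal ?_
    calc (len u v).toReal = B / A * (A * (len u v).toReal / B) := by field_simp
      _ ≤ _ := mul_le_mul_of_nonneg_left (Nat.le_ceil _) (by positivity)
  · rw [ENNReal.mul_top (by positivity)]
    exact le_top

theorem mul_roundedLen_le {u v : V} (h : len u v ≤ ENNReal.ofReal B) :
    ENNReal.ofReal (B / A) * roundedLen A B len u v ≤ len u v + ENNReal.ofReal (B / A) := by
  have hfin : len u v ≠ ∞ := ne_top_of_le_ne_top ENNReal.ofReal_ne_top h
  rw [roundedLen, if_pos h, ← ENNReal.ofReal_natCast, ← ENNReal.ofReal_mul (by positivity)]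
  conv_rhs =>
    rw [← ENNReal.ofReal_toReal hfin, ← ENNReal.ofReal_add ENNReal.toReal_nonneg (by positivity)]
  refine ENNReal.ofReal_le_ofReal ?_
  calc B / A * ⌈A * (len u v).toReal / B⌉₊ ≤ B / A * (A * (len u v).toReal / B + 1) :=
        mul_le_mul_of_nonneg_left (Nat.ceil_lt_add_one (by positivity)).le (by positivity)
    _ = (len u v).toReal + B / A := by field_simp

theorem gdist_le_mul_gdist_roundedLen (s t : V) :
    gdist len s t ≤ ENNReal.ofReal (B / A) * gdist (roundedLen A B len) s t := by
  rw [← gdist_const_mul (by positivity) ENNReal.ofReal_ne_top]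
  exact gdist_mono (le_mul_roundedLen hA hB) s t

theorem mul_gdist_roundedLen_le {s t : V} {p : List V} (hp : IsWalkFromTo s t p)
    (hedges : p.IsChain fun u v => len u v ≤ ENNReal.ofReal B) :
    ENNReal.ofReal (B / A) * gdist (roundedLen A B len) s t ≤
      walkLen len p + (p.length - 1 : ℕ) * ENNReal.ofReal (B / A) :=
  calc ENNReal.ofReal (B / A) * gdist (roundedLen A B len) s t
      ≤ ENNReal.ofReal (B / A) * walkLen (roundedLen A B len) p := by
        gcongr; exact gdist_le_walkLen hp
    _ = walkLen (fun u v => ENNReal.ofReal (B / A) * roundedLen A B len u v) p :=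
        (walkLen_const_mul _ _ p).symm
    _ ≤ walkLen (fun u v => len u v + ENNReal.ofReal (B / A)) p :=
        walkLen_le_walkLen_of_isChain (hedges.imp fun _ _ => mul_roundedLen_le hA hB)
    _ = _ := by rw [walkLen_add, walkLen_const]

end Rounding

theorem le_pow_natCeil_logb {b x : ℝ} (hb : 1 < b) (hx : 0 < x) : x ≤ b ^ ⌈Real.logb b x⌉₊ :=
  calc x = b ^ Real.logb b x := (Real.rpow_logb (by linarith) hb.ne' hx).symm
    _ ≤ b ^ (⌈Real.logb b x⌉₊ : ℝ) := Real.rpow_le_rpow_of_exponent_le hb.le (Nat.le_ceil _)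
    _ = b ^ ⌈Real.logb b x⌉₊ := Real.rpow_natCast b _

theorem exists_le_two_pow_le_max {x : ℝ} {k : ℕ} (hk : x ≤ 2 ^ k) :
    ∃ i ≤ k, x ≤ 2 ^ i ∧ (2 : ℝ) ^ i ≤ max 1 (2 * x) := by
  have hex : ∃ i : ℕ, x ≤ 2 ^ i := ⟨k, hk⟩
  refine ⟨Nat.find hex, Nat.find_min' hex hk, Nat.find_spec hex, ?_⟩
  rcases Nat.eq_zero_or_pos (Nat.find hex) with h0 | hpos
  · simp [h0]
  · have hlt : (2 : ℝ) ^ (Nat.find hex - 1) < x := not_le.1 (Nat.find_min hex (by omega))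
    have : (2 : ℝ) ^ Nat.find hex = 2 * 2 ^ (Nat.find hex - 1) := by
      rw [← pow_succ', Nat.sub_add_cancel hpos]
    exact le_max_of_le_right (by linarith)

theorem iInf_mul_gdist_roundedLen_le {len : V → V → ℝ≥0∞} (hone : ∀ u v, 1 ≤ len u v)
    {A ε : ℝ} (hA : 0 < A) (hε : 0 ≤ ε) {k : ℕ} {s t : V} (hk : (gdist len s t).toReal ≤ 2 ^ k)
    {p : List V} (hp : IsWalkFromTo s t p) (hpD : walkLen len p = gdist len s t)
    (hpA : 2 * ((p.length - 1 : ℕ) : ℝ) ≤ ε * A) :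
    ⨅ i ∈ Finset.range (k + 1),
        ENNReal.ofReal ((2 : ℝ) ^ i / A) * gdist (roundedLen A (2 ^ i) len) s t ≤
      ENNReal.ofReal (1 + ε) * gdist len s t := by
  rcases eq_or_ne (gdist len s t) ∞ with htop | hfin
  · rw [htop, ENNReal.mul_top (by positivity)]
    exact le_top
  set m := p.length - 1
  set D := (gdist len s t).toReal
  have hD : gdist len s t = ENNReal.ofReal D := (ENNReal.ofReal_toReal hfin).symm
  have hmD : (m : ℝ) ≤ D := by
    have := natCast_le_walkLen hone p
    rwa [hpD, hD, ← ENNReal.ofReal_natCast,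
      ENNReal.ofReal_le_ofReal_iff ENNReal.toReal_nonneg] at this
  obtain ⟨i, hik, hDi, hiD⟩ := exists_le_two_pow_le_max hk
  have hedges : p.IsChain fun u v => len u v ≤ ENNReal.ofReal (2 ^ i) :=
    (isChain_le_walkLen len p).imp fun _ _ h =>
      h.trans (by rw [hpD, hD]; exact ENNReal.ofReal_le_ofReal hDi)
  have hslack : (m : ℝ) * (2 ^ i / A) ≤ ε * D := by
    have hmm : (m : ℝ) ≤ m * m := by exact_mod_cast Nat.le_mul_self m
    rw [mul_div_assoc', div_le_iff₀ hA]
    rcases max_cases 1 (2 * D) with ⟨hmax, _⟩ | ⟨hmax, _⟩ <;> rw [hmax] at hiD <;>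
      nlinarith [(m.cast_nonneg : (0 : ℝ) ≤ m)]
  calc ⨅ i ∈ Finset.range (k + 1),
        ENNReal.ofReal ((2 : ℝ) ^ i / A) * gdist (roundedLen A (2 ^ i) len) s t
      ≤ ENNReal.ofReal ((2 : ℝ) ^ i / A) * gdist (roundedLen A (2 ^ i) len) s t :=
        iInf₂_le i (Finset.mem_range.2 (Nat.lt_succ_of_le hik))
    _ ≤ walkLen len p + m * ENNReal.ofReal ((2 : ℝ) ^ i / A) :=
        mul_gdist_roundedLen_le hA (by positivity) hp hedges
    _ ≤ gdist len s t + ENNReal.ofReal ε * gdist len s t := by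
        rw [hpD, hD, ← ENNReal.ofReal_natCast, ← ENNReal.ofReal_mul (Nat.cast_nonneg m),
          ← ENNReal.ofReal_mul hε]
        gcongr
    _ = ENNReal.ofReal (1 + ε) * gdist len s t := by
        rw [ENNReal.ofReal_add zero_le_one hε, ENNReal.ofReal_one, add_mul, one_mul]

theorem stmt_1_general [Fintype V] (len : V → V → ℝ≥0∞)
    (W ε a : ℝ) (hW : 1 ≤ W) (hε : 0 < ε) (ha1 : a < 1)
    (hw : ∀ u v, len u v ≠ ∞ → 1 ≤ len u v ∧ len u v ≤ ENNReal.ofReal W)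
    (k : ℕ) (hk : k = ⌈Real.logb 2 ((Fintype.card V : ℝ) * W)⌉₊)
    (leni : ℕ → V → V → ℝ≥0∞)
    (hleni : ∀ i u v, leni i u v =
      if len u v ≤ ENNReal.ofReal ((2:ℝ)^i) then
        ((⌈(2 * (Fintype.card V : ℝ)^a / ε) * (len u v).toReal / (2:ℝ)^i⌉₊ : ℕ) : ℝ≥0∞)
      else ∞)
    (s t : V) :
    (gdist len s t ≤
      ⨅ i ∈ Finset.range (k+1),
        ENNReal.ofReal ((2:ℝ)^i / (2 * (Fintype.card V : ℝ)^a / ε)) *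
          gdist (leni i) s t) ∧
    ((∃ p, IsWalkFromTo s t p ∧ walkLen len p = gdist len s t ∧
        ((p.length : ℝ) - 1) ≤ (Fintype.card V : ℝ)^a) →
      (⨅ i ∈ Finset.range (k+1),
        ENNReal.ofReal ((2:ℝ)^i / (2 * (Fintype.card V : ℝ)^a / ε)) *
          gdist (leni i) s t) ≤
        ENNReal.ofReal (1 + ε) * gdist len s t) := by
  set n : ℝ := (Fintype.card V : ℝ)
  have hn : 1 ≤ n := Nat.one_le_cast.2 (Fintype.card_pos_iff.2 ⟨s⟩)
  set A := 2 * n ^ a / ε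
  have hA : 0 < A := by positivity
  obtain rfl : leni = fun i => roundedLen A (2 ^ i) len := funext fun i => funext₂ (hleni i)
  refine ⟨le_iInf₂ fun i _ => gdist_le_mul_gdist_roundedLen hA (by positivity) s t, ?_⟩
  rintro ⟨p, hp, hpD, hpm⟩
  have hone : ∀ u v, 1 ≤ len u v := fun u v =>
    (eq_or_ne (len u v) ∞).elim (fun h => h ▸ le_top) fun h => (hw u v h).1
  have hm : ((p.length - 1 : ℕ) : ℝ) ≤ n ^ a := by
    rcases p with _ | ⟨_, rest⟩
    · simpa using (Real.rpow_pos_of_pos (by linarith) a).le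
    · simpa using hpm
  refine iInf_mul_gdist_roundedLen_le hone hA hε.le ?_ hp hpD ?_
  · rw [← hpD, hk]
    calc (walkLen len p).toReal ≤ (p.length - 1 : ℕ) * W :=
          toReal_walkLen_le (by linarith) (fun u v h => (hw u v h).2) p
      _ ≤ n * W := by
          gcongr
          exact hm.trans (Real.rpow_le_rpow_of_exponent_le hn ha1.le |>.trans_eq (Real.rpow_one n))
      _ ≤ _ := le_pow_natCeil_logb one_lt_two (by positivity)
  · rw [show ε * A = 2 * n ^ a by simp only [A]; field_simp]
    linarith

/-- for the family of `(A, B_i)`-rounded graphs `G_i` with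
`B_i = 2^i`, `A = 2n^a/ε`, `i = 0,…,k = ⌈log₂(nW)⌉`:
`dist_G(s,t) ≤ min_i (B_i/A)·dist_{G_i}(s,t)`, and if some shortest `s`-`t`
path uses at most `n^a` edges, then
`min_i (B_i/A)·dist_{G_i}(s,t) ≤ (1+ε)·dist_G(s,t)`. -/
theorem stmt_1 [Fintype V] (len : V → V → ℝ≥0∞)
    (W ε a : ℝ) (hW : 1 ≤ W) (hε : 0 < ε) (ha0 : 0 < a) (ha1 : a < 1)
    (hw : ∀ u v, len u v ≠ ∞ → 1 ≤ len u v ∧ len u v ≤ ENNReal.ofReal W)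
    (k : ℕ) (hk : k = ⌈Real.logb 2 ((Fintype.card V : ℝ) * W)⌉₊)
    (leni : ℕ → V → V → ℝ≥0∞)
    (hleni : ∀ i u v, leni i u v =
      if len u v ≤ ENNReal.ofReal ((2:ℝ)^i) then
        ((⌈(2 * (Fintype.card V : ℝ)^a / ε) * (len u v).toReal / (2:ℝ)^i⌉₊ : ℕ) : ℝ≥0∞)
      else ∞)
    (s t : V) :
    (gdist len s t ≤
      ⨅ i ∈ Finset.range (k+1),
        ENNReal.ofReal ((2:ℝ)^i / (2 * (Fintype.card V : ℝ)^a / ε)) *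
          gdist (leni i) s t) ∧
    ((∃ p, IsWalkFromTo s t p ∧ walkLen len p = gdist len s t ∧
        ((p.length : ℝ) - 1) ≤ (Fintype.card V : ℝ)^a) →
      (⨅ i ∈ Finset.range (k+1),
        ENNReal.ofReal ((2:ℝ)^i / (2 * (Fintype.card V : ℝ)^a / ε)) *
          gdist (leni i) s t) ≤
        ENNReal.ofReal (1 + ε) * gdist len s t) :=
  stmt_1_general len W ε a hW hε ha1 hw k hk leni hleni s t
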